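/- Define w_1 = a, w_2 = b, w_3 = ba, w_4 = baabbaa, and w_n = b·TM_{2n-8}·complement(TM_{2n-6})·complement(TM_{2n-6})' for n ≥ 5. Then for every n ≥ 0, the concatenation w_1·w_2·⋯·w_m is a prefix of the infinite Thue-Morse word for every m, equivalently: for every m ≥ 1, w_1⋯w_m is a prefix of TM_K for all sufficiently large K. -/

import Mathlib

/-!
By induction on `j`, `w_1 ⋯ w_{j+4} = TM_{2j+3} · comp(TM_{2j+2})'`: the letter `b` opening
`w_{j+5}` restores the last letter of `comp(TM_{2j+2})` (Thue–Morse words of even order end in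
`a`), and then `TM_{2j+3} · comp(TM_{2j+2}) · TM_{2j+2} · comp(TM_{2j+4}) = TM_{2j+5}`.
Since `comp(TM_{2j+3})` begins with `comp(TM_{2j+2})`, the product `w_1 ⋯ w_{j+4}` is a prefix of
`TM_{2j+4}`, hence `w_1 ⋯ w_m` is a prefix of `TM_K` for every `K ≥ 2m + 4`.
-/

/-- Alphabet {a,b} with a = false, b = true, a < b. -/
abbrev Letter := Bool

/-- Lexicographic order (proper prefixes are smaller). -/
def lexlt (x y : List Bool) : Prop := List.Lex (· < ·) x y

/-- Fibonacci words: F 0 = b, F 1 = a, F (k+2) = F (k+1) ++ F k. -/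
def Fib : ℕ → List Bool
  | 0 => [true]
  | 1 => [false]
  | (k+2) => Fib (k+1) ++ Fib k

/-- bitwise complement -/
def comp (w : List Bool) : List Bool := w.map (fun c => !c)

/-- Thue-Morse words: TM 0 = a, TM (k+1) = TM k ++ comp (TM k). -/
def TM : ℕ → List Bool
  | 0 => [false]
  | (k+1) => TM k ++ comp (TM k)

/-- Fueled Nyldon predicate: a string of length 1 is Nyldon; a longer string is
Nyldon iff it admits no factorization into ≥ 2 Nyldon words in lexicographically
non-decreasing order. -/
def NyldonAux : ℕ → List Bool → Prop
  | 0, _ => False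
  | (n+1), w =>
    w.length = 1 ∨ (1 < w.length ∧
      ¬ ∃ fs : List (List Bool), 2 ≤ fs.length ∧ fs.flatten = w ∧
        fs.Chain' lexlt ∧ ∀ u ∈ fs, NyldonAux n u)

def Nyldon (w : List Bool) : Prop := NyldonAux w.length w

/-- H k = Fib k with its first letter removed. -/
def H (k : ℕ) : List Bool := (Fib k).tail

/-- s is the longest Nyldon proper suffix of w. -/
def IsLnps (w s : List Bool) : Prop :=
  s <:+ w ∧ s ≠ w ∧ Nyldon s ∧
    ∀ t : List Bool, t <:+ w → t ≠ w → Nyldon t → t.length ≤ s.length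

/-- Thue-Morse morphism: τ(a)=ab, τ(b)=ba. -/
def tau (w : List Bool) : List Bool :=
  w.flatMap (fun c => if c then [true, false] else [false, true])

/-- The sequence w_n: w_1=a, w_2=b, w_3=ba, w_4=baabbaa,
w_n = b·TM_{2n-8}·comp(TM_{2n-6})·comp(TM_{2n-6})' for n ≥ 5. -/
def wseq : ℕ → List Bool
  | 0 => []
  | 1 => [false]
  | 2 => [true]
  | 3 => [true, false]
  | 4 => [true, false, false, true, true, false, false]
  | (n+5) => true :: (TM (2*n+2) ++ comp (TM (2*n+4)) ++ (comp (TM (2*n+4))).dropLast)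

/-- The twelve words t_i(k). -/
def tword : ℕ → ℕ → List Bool
  | 1, k => true :: (TM (2*k+1)).dropLast
  | 2, k => true :: TM (2*k+1)
  | 3, k => true :: (TM (2*k+1) ++ (comp (TM (2*k))).dropLast)
  | 4, k => true :: TM (2*k)
  | 5, k => true :: (TM (2*k) ++ TM (2*k-1) ++ (comp (TM (2*k-2))).dropLast)
  | 6, k => true :: (TM (2*k) ++ (TM (2*k+1)).dropLast)
  | 7, k => true :: (TM (2*k) ++ TM (2*k+1))
  | 8, k => true :: (TM (2*k) ++ TM (2*k+1) ++ (comp (TM (2*k))).dropLast)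
  | 9, k => true :: (TM (2*k) ++ (comp (TM (2*k+2))).dropLast)
  | 10, k => true :: (TM (2*k) ++ comp (TM (2*k+2)))
  | 11, k => true :: (TM (2*k) ++ TM (2*k+1) ++ (comp (TM (2*k+2))).dropLast)
  | 12, k => true :: (TM (2*k) ++ comp (TM (2*k+2)) ++ (comp (TM (2*k+2))).dropLast)
  | _, _ => []

lemma comp_append (u v : List Bool) : comp (u ++ v) = comp u ++ comp v :=
  List.map_append

lemma comp_comp (w : List Bool) : comp (comp w) = w := by
  simp [comp, Function.comp_def]

lemma comp_TM_succ (k : ℕ) : comp (TM (k + 1)) = comp (TM k) ++ TM k := by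
  rw [TM, comp_append, comp_comp]

lemma TM_prefix_TM_of_le {k K : ℕ} (h : k ≤ K) : TM k <+: TM K := by
  induction K, h using Nat.le_induction with
  | base => exact List.prefix_refl _
  | succ K _ ih => exact ih.trans (List.prefix_append _ _)

lemma TM_getLast? (k : ℕ) : (TM k).getLast? = some k.bodd := by
  induction k with
  | zero => rfl
  | succ k ih =>
    cases h : (TM k).getLast? with
    | none => simp [h] at ih
    | some c => simp_all [TM, comp, List.getLast?_append]

lemma comp_TM_two_mul_dropLast_append (k : ℕ) :
    (comp (TM (2 * k))).dropLast ++ [true] = comp (TM (2 * k)) :=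
  List.dropLast_append_getLast? _ (by simp [comp, List.getLast?_map, TM_getLast?])

def wprod (m : ℕ) : List Bool :=
  ((List.range m).map (fun i => wseq (i + 1))).flatten

lemma wprod_succ (m : ℕ) : wprod (m + 1) = wprod m ++ wseq (m + 1) := by
  simp [wprod, List.range_succ]

lemma wprod_prefix_wprod_of_le {m n : ℕ} (h : m ≤ n) : wprod m <+: wprod n := by
  induction n, h using Nat.le_induction with
  | base => exact List.prefix_refl _
  | succ n _ ih => exact ih.trans (wprod_succ n ▸ List.prefix_append _ _)

lemma wprod_add_four (j : ℕ) :
    wprod (j + 4) = TM (2 * j + 3) ++ (comp (TM (2 * j + 2))).dropLast := by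
  induction j with
  | zero => decide
  | succ j ih =>
    have hb : (comp (TM (2 * j + 2))).dropLast ++ [true] = comp (TM (2 * j + 2)) :=
      comp_TM_two_mul_dropLast_append (j + 1)
    have hw : wseq (j + 5) = true ::
        (TM (2 * j + 2) ++ comp (TM (2 * j + 4)) ++ (comp (TM (2 * j + 4))).dropLast) := rfl
    calc wprod (j + 5)
        = TM (2 * j + 3) ++ ((comp (TM (2 * j + 2))).dropLast ++ [true]) ++ TM (2 * j + 2)
            ++ comp (TM (2 * j + 4)) ++ (comp (TM (2 * j + 4))).dropLast := by
          rw [wprod_succ, ih, hw]; simp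
      _ = TM (2 * j + 3) ++ comp (TM (2 * j + 3))
            ++ comp (TM (2 * j + 4)) ++ (comp (TM (2 * j + 4))).dropLast := by
          rw [hb, comp_TM_succ (2 * j + 2)]; simp
      _ = TM (2 * (j + 1) + 3) ++ (comp (TM (2 * (j + 1) + 2))).dropLast := rfl

lemma wprod_add_four_prefix_TM (j : ℕ) : wprod (j + 4) <+: TM (2 * j + 4) := by
  have hTM : TM (2 * j + 4) = TM (2 * j + 3) ++ (comp (TM (2 * j + 2)) ++ TM (2 * j + 2)) := by
    rw [← comp_TM_succ]; rfl
  rw [wprod_add_four, hTM]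
  exact (List.prefix_append_right_inj _).mpr
    ((List.dropLast_prefix _).trans (List.prefix_append _ _))

theorem stmt17 : ∀ m : ℕ, 1 ≤ m → ∃ N : ℕ, ∀ K : ℕ, N ≤ K →
    ((List.range m).map (fun i => wseq (i+1))).flatten <+: TM K := by
  intro m _
  refine ⟨2 * m + 4, fun K hK => ?_⟩
  exact (wprod_prefix_wprod_of_le (Nat.le_add_right m 4)).trans
    ((wprod_add_four_prefix_TM m).trans (TM_prefix_TM_of_le hK))
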